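/- arXiv:2301.10499 — 2 statements merged into one kernel-verified Lean document; each statement's English description precedes it below -/
import Mathlib

section
/- Let X be a symmetric n×n real matrix and λ > 0. If (U*, V*) with U*, V* nonnegative n×r matrices is a critical point of f(U,V) = (1/2)‖X − U Vᵀ‖_F² + (λ/2)‖U − V‖_F² subject to U ≥ 0, V ≥ 0 (i.e., there exist G, H with G ⊙ U* = 0, G ≤ 0, H ⊙ V* = 0, H ≤ 0 such that (U*V*ᵀ − X)V* + λ(U* − V*) + G = 0 and (U*V*ᵀ − X)ᵀU* − λ(U* − V*) + H = 0), and if the spectral norm satisfies ‖U*V*ᵀ‖₂ < 2λ + σ_n(X), then U* = V*. -/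
open Matrix BigOperators

/-- Frobenius norm of a real matrix. -/
noncomputable def frob {n m : ℕ} (A : Matrix (Fin n) (Fin m) ℝ) : ℝ :=
  Real.sqrt (∑ i, ∑ j, (A i j)^2)

/-- Spectral (ℓ2 operator) norm of a square real matrix. -/
noncomputable def specNorm {n : ℕ} (A : Matrix (Fin n) (Fin n) ℝ) : ℝ :=
  ‖(Matrix.toEuclideanCLM (𝕜 := ℝ) A : EuclideanSpace ℝ (Fin n) →L[ℝ] EuclideanSpace ℝ (Fin n))‖

/-- Trace inner product ⟨A, B⟩ = trace(Aᵀ B). -/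
noncomputable def inprod {n m : ℕ} (A B : Matrix (Fin n) (Fin m) ℝ) : ℝ :=
  (Aᵀ * B).trace

/-!
Put `D = U - V` and `A = U Vᵀ`, and pair the difference of the two stationarity equations
with `D` in the trace inner product:
`⟨D, (A - Aᵀ) U⟩ - ⟨D, A D⟩ + ⟨D, X D⟩ + 2λ ‖D‖² + ⟨D, G⟩ - ⟨D, H⟩ = 0`.
Since `A - Aᵀ` is skew, the first term is `‖A - Aᵀ‖² / 2 ≥ 0`; complementary slackness
gives `⟨D, G⟩ ≥ 0 ≥ ⟨D, H⟩`; and `⟨D, A D⟩ ≤ ‖A‖₂ ‖D‖²`, `⟨D, X D⟩ ≥ σ_n(X) ‖D‖²`.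
Hence `(2λ + σ_n(X) - ‖A‖₂) ‖D‖² ≤ 0`, and the spectral-norm hypothesis forces `D = 0`.
-/

namespace Matrix

variable {m n : Type*} [Fintype m] [Fintype n]

lemma trace_transpose_mul_self_nonneg (D : Matrix m n ℝ) : 0 ≤ (Dᵀ * D).trace := by
  simpa [conjTranspose_eq_transpose_of_trivial] using
    (posSemidef_conjTranspose_mul_self D).trace_nonneg

lemma trace_transpose_mul_mul_eq_sum {R : Type*} [CommSemiring R] (B : Matrix m m R)
    (D : Matrix m n R) : (Dᵀ * (B * D)).trace = ∑ j, Dᵀ j ⬝ᵥ (B *ᵥ Dᵀ j) := by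
  simp only [trace, diag, mul_apply, mulVec, dotProduct, transpose_apply, Finset.mul_sum]

lemma trace_transpose_mul_mul_self_eq_zero_of_transpose_eq_neg {S : Matrix m m ℝ}
    (hS : Sᵀ = -S) (U : Matrix m n ℝ) : (Uᵀ * (S * U)).trace = 0 := by
  have h : (Uᵀ * (S * U)).trace = -(Uᵀ * (S * U)).trace := by
    conv_lhs => rw [← trace_transpose]
    simp only [transpose_mul, transpose_transpose, hS, Matrix.neg_mul, Matrix.mul_neg,
      trace_neg, Matrix.mul_assoc]
  linarith

lemma two_mul_trace_transpose_sub_mul_mul (U V : Matrix m n ℝ) :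
    2 * ((U - V)ᵀ * ((U * Vᵀ - V * Uᵀ) * U)).trace
      = ((U * Vᵀ - V * Uᵀ)ᵀ * (U * Vᵀ - V * Uᵀ)).trace := by
  set S := U * Vᵀ - V * Uᵀ
  have hS : Sᵀ = -S := by simp [S, transpose_sub, transpose_mul]
  have hU : (Uᵀ * (S * U)).trace = 0 :=
    trace_transpose_mul_mul_self_eq_zero_of_transpose_eq_neg hS U
  have hV : (Vᵀ * (S * U)).trace = (S * (U * Vᵀ)).trace := by
    rw [trace_mul_comm, Matrix.mul_assoc]
  have hVU : (S * (V * Uᵀ)).trace = -(S * (U * Vᵀ)).trace := by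
    rw [← trace_transpose, transpose_mul, hS, transpose_mul, transpose_transpose, mul_neg,
      trace_neg, trace_mul_comm]
  have hSS : (S * S).trace = 2 * (S * (U * Vᵀ)).trace :=
    calc (S * S).trace = (S * (U * Vᵀ - V * Uᵀ)).trace := rfl
      _ = 2 * (S * (U * Vᵀ)).trace := by rw [Matrix.mul_sub, trace_sub, hVU]; ring
  rw [transpose_sub, Matrix.sub_mul, trace_sub, hU, hV, hS, Matrix.neg_mul, trace_neg, hSS]
  ring

lemma trace_transpose_sub_mul_mul_nonneg (U V : Matrix m n ℝ) :
    0 ≤ ((U - V)ᵀ * ((U * Vᵀ - V * Uᵀ) * U)).trace := by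
  have := two_mul_trace_transpose_sub_mul_mul U V
  linarith [trace_transpose_mul_self_nonneg (U * Vᵀ - V * Uᵀ)]

lemma trace_transpose_sub_mul_nonneg {U V G : Matrix m n ℝ} (hV : ∀ i j, 0 ≤ V i j)
    (hGU : ∀ i j, G i j * U i j = 0) (hG : ∀ i j, G i j ≤ 0) :
    0 ≤ ((U - V)ᵀ * G).trace := by
  simp only [trace, diag, mul_apply, transpose_apply, sub_apply]
  refine Finset.sum_nonneg fun j _ => Finset.sum_nonneg fun i _ => ?_
  have : (U i j - V i j) * G i j = -(V i j * G i j) := by linear_combination hGU i j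
  rw [this, neg_nonneg]
  exact mul_nonpos_of_nonneg_of_nonpos (hV i j) (hG i j)

open scoped MatrixOrder in
lemma IsHermitian.iInf_eigenvalues_mul_trace_le [DecidableEq m] {X : Matrix m m ℝ}
    (hX : X.IsHermitian) (D : Matrix m n ℝ) :
    (⨅ i, hX.eigenvalues i) * (Dᵀ * D).trace ≤ (Dᵀ * (X * D)).trace := by
  have hle : algebraMap ℝ (Matrix m m ℝ) (⨅ i, hX.eigenvalues i) ≤ X := by
    rw [algebraMap_le_iff_le_spectrum hX.isSelfAdjoint, hX.spectrum_real_eq_range_eigenvalues]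
    rintro _ ⟨i, rfl⟩
    exact ciInf_le (Finite.bddBelow_range _) i
  have := ((le_iff.mp hle).conjTranspose_mul_mul_same D).trace_nonneg
  rw [conjTranspose_eq_transpose_of_trivial, Algebra.algebraMap_eq_smul_one, Matrix.mul_sub,
    Matrix.sub_mul, trace_sub, Matrix.mul_smul, Matrix.mul_one, Matrix.smul_mul, trace_smul,
    smul_eq_mul, Matrix.mul_assoc] at this
  linarith

lemma trace_identity_of_stationary {X : Matrix m m ℝ} (hX : Xᵀ = X) {lam : ℝ}
    {U V G H : Matrix m n ℝ}
    (heq1 : (U * Vᵀ - X) * V + lam • (U - V) + G = 0)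
    (heq2 : (U * Vᵀ - X)ᵀ * U - lam • (U - V) + H = 0) :
    ((U - V)ᵀ * ((U * Vᵀ - V * Uᵀ) * U)).trace - ((U - V)ᵀ * (U * Vᵀ * (U - V))).trace
      + ((U - V)ᵀ * (X * (U - V))).trace + 2 * lam * ((U - V)ᵀ * (U - V)).trace
      + ((U - V)ᵀ * G).trace - ((U - V)ᵀ * H).trace = 0 := by
  rw [transpose_sub, transpose_mul, transpose_transpose, hX] at heq2
  have hdiff : (U * Vᵀ - V * Uᵀ) * U - U * Vᵀ * (U - V) + X * (U - V)
      + (2 * lam) • (U - V) + G - H = 0 :=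
    calc _ = ((U * Vᵀ - X) * V + lam • (U - V) + G)
          - ((V * Uᵀ - X) * U - lam • (U - V) + H) := by
          simp only [Matrix.sub_mul, Matrix.mul_sub, two_mul, add_smul]
          abel
      _ = 0 := by rw [heq1, heq2, sub_zero]
  simpa only [Matrix.mul_add, Matrix.mul_sub, trace_add, trace_sub, Matrix.mul_smul,
    trace_smul, smul_eq_mul, Matrix.mul_zero, trace_zero] using
    congrArg (fun M ↦ ((U - V)ᵀ * M).trace) hdiff

end Matrix

lemma dotProduct_mulVec_le_specNorm_mul {n : ℕ} (A : Matrix (Fin n) (Fin n) ℝ)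
    (x : Fin n → ℝ) : x ⬝ᵥ (A *ᵥ x) ≤ specNorm A * (x ⬝ᵥ x) := by
  set T := toEuclideanCLM (𝕜 := ℝ) A
  set v := WithLp.toLp 2 x
  have hv : ‖v‖ ^ 2 = x ⬝ᵥ x := by
    rw [← real_inner_self_eq_norm_sq, EuclideanSpace.inner_toLp_toLp, star_trivial]
  calc x ⬝ᵥ (A *ᵥ x) = inner ℝ v (T v) := by
        simp [v, T, EuclideanSpace.inner_toLp_toLp, dotProduct_comm]
    _ ≤ ‖v‖ * ‖T v‖ := real_inner_le_norm v (T v)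
    _ ≤ ‖v‖ * (‖T‖ * ‖v‖) := by gcongr; exact T.le_opNorm v
    _ = specNorm A * (x ⬝ᵥ x) := by rw [specNorm, ← hv]; ring

lemma trace_transpose_mul_mul_le_specNorm_mul {n : ℕ} {r : Type*} [Fintype r]
    (A : Matrix (Fin n) (Fin n) ℝ) (D : Matrix (Fin n) r ℝ) :
    (Dᵀ * (A * D)).trace ≤ specNorm A * (Dᵀ * D).trace := by
  have hDD : (Dᵀ * D).trace = ∑ j, Dᵀ j ⬝ᵥ Dᵀ j := by
    simpa using trace_transpose_mul_mul_eq_sum 1 D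
  rw [trace_transpose_mul_mul_eq_sum, hDD, Finset.mul_sum]
  exact Finset.sum_le_sum fun j _ ↦ dotProduct_mulVec_le_specNorm_mul A (Dᵀ j)

theorem critical_point_U_eq_V_general {n r : ℕ}
    (X : Matrix (Fin n) (Fin n) ℝ) (hX : X.IsHermitian)
    (lam : ℝ)
    (U V : Matrix (Fin n) (Fin r) ℝ)
    (hU : ∀ i j, 0 ≤ U i j) (hV : ∀ i j, 0 ≤ V i j)
    (G H : Matrix (Fin n) (Fin r) ℝ)
    (hGU : ∀ i j, G i j * U i j = 0) (hGnp : ∀ i j, G i j ≤ 0)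
    (hHV : ∀ i j, H i j * V i j = 0) (hHnp : ∀ i j, H i j ≤ 0)
    (heq1 : (U * Vᵀ - X) * V + lam • (U - V) + G = 0)
    (heq2 : (U * Vᵀ - X)ᵀ * U - lam • (U - V) + H = 0)
    (hnorm : specNorm (U * Vᵀ) < 2 * lam + ⨅ i, hX.eigenvalues i) :
    U = V := by
  have hid := trace_identity_of_stationary (isHermitian_iff_isSymm.mp hX).eq heq1 heq2
  set D := U - V
  have hskew := trace_transpose_sub_mul_mul_nonneg U V
  have hA := trace_transpose_mul_mul_le_specNorm_mul (U * Vᵀ) D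
  have hXD := hX.iInf_eigenvalues_mul_trace_le D
  have hG := trace_transpose_sub_mul_nonneg hV hGU hGnp
  have hH := trace_transpose_sub_mul_nonneg hU hHV hHnp
  rw [← neg_sub, transpose_neg, Matrix.neg_mul, trace_neg, neg_nonneg] at hH
  have hcoef :
      (2 * lam + (⨅ i, hX.eigenvalues i) - specNorm (U * Vᵀ)) * (Dᵀ * D).trace ≤ 0 := by
    linarith
  have hDD : (Dᵀ * D).trace = 0 :=
    le_antisymm (nonpos_of_mul_nonpos_right hcoef (by linarith))
      (trace_transpose_mul_self_nonneg D)
  rw [← conjTranspose_eq_transpose_of_trivial, trace_conjTranspose_mul_self_eq_zero_iff] at hDD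
  exact sub_eq_zero.mp hDD

theorem critical_point_U_eq_V {n r : ℕ} [NeZero n]
    (X : Matrix (Fin n) (Fin n) ℝ) (hX : X.IsHermitian)
    (lam : ℝ) (hlam : 0 < lam)
    (U V : Matrix (Fin n) (Fin r) ℝ)
    (hU : ∀ i j, 0 ≤ U i j) (hV : ∀ i j, 0 ≤ V i j)
    (G H : Matrix (Fin n) (Fin r) ℝ)
    (hGU : ∀ i j, G i j * U i j = 0) (hGnp : ∀ i j, G i j ≤ 0)
    (hHV : ∀ i j, H i j * V i j = 0) (hHnp : ∀ i j, H i j ≤ 0)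
    (heq1 : (U * Vᵀ - X) * V + lam • (U - V) + G = 0)
    (heq2 : (U * Vᵀ - X)ᵀ * U - lam • (U - V) + H = 0)
    (hnorm : specNorm (U * Vᵀ) < 2 * lam + ⨅ i, hX.eigenvalues i) :
    U = V :=
  critical_point_U_eq_V_general X hX lam U V hU hV G H hGU hGnp hHV hHnp heq1 heq2 hnorm
end

section
/- For any matrices U, V ∈ R^{n×r}, the inner product ⟨V Uᵀ U − U Vᵀ V, U − V⟩ equals ⟨(V Uᵀ + U Vᵀ)/2, (U − V)(U − V)ᵀ⟩ − (1/2)‖U Vᵀ − V Uᵀ‖_F². -/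
open Matrix BigOperators

lemma frob_sq {n m : ℕ} (A : Matrix (Fin n) (Fin m) ℝ) :
    frob A ^ 2 = (Aᵀ * A).trace := by
  have h : (∑ i, ∑ j, (A i j)^2) = (Aᵀ * A).trace := by
    simp [Matrix.trace, Matrix.mul_apply, Matrix.diag, sq]
    exact Finset.sum_comm
  rw [frob, Real.sq_sqrt, h]
  positivity

lemma cyc4 {a b c d : ℕ} (A : Matrix (Fin a) (Fin b) ℝ) (B : Matrix (Fin b) (Fin c) ℝ)
    (C : Matrix (Fin c) (Fin d) ℝ) (D : Matrix (Fin d) (Fin a) ℝ) :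
    (A*(B*(C*D))).trace = (B*(C*(D*A))).trace := by
  rw [Matrix.trace_mul_comm]; simp only [Matrix.mul_assoc]

lemma tp4 {a b c d : ℕ} (A : Matrix (Fin a) (Fin b) ℝ) (B : Matrix (Fin b) (Fin c) ℝ)
    (C : Matrix (Fin c) (Fin d) ℝ) (D : Matrix (Fin d) (Fin a) ℝ) :
    (A*(B*(C*D))).trace = (Dᵀ*(Cᵀ*(Bᵀ*Aᵀ))).trace := by
  rw [← Matrix.trace_transpose]; simp [Matrix.transpose_mul, Matrix.mul_assoc]

theorem inner_product_identity {n r : ℕ} (U V : Matrix (Fin n) (Fin r) ℝ) :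
    inprod (V * Uᵀ * U - U * Vᵀ * V) (U - V) =
      inprod ((1/2 : ℝ) • (V * Uᵀ + U * Vᵀ)) ((U - V) * (U - V)ᵀ)
        - (1/2) * frob (U * Vᵀ - V * Uᵀ) ^ 2 := by
  rw [inprod, inprod, frob_sq]
  have l1 : (Vᵀ*(V*(Uᵀ*U))).trace = (Uᵀ*(U*(Vᵀ*V))).trace :=
    (cyc4 Vᵀ V Uᵀ U).trans (cyc4 V Uᵀ U Vᵀ)
  have h1 : (U*(Vᵀ*(U*Uᵀ))).trace = (Uᵀ*(U*(Vᵀ*U))).trace :=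
    (cyc4 U Vᵀ U Uᵀ).trans ((cyc4 Vᵀ U Uᵀ U).trans (cyc4 U Uᵀ U Vᵀ))
  have h2 : (V*(Uᵀ*(U*Uᵀ))).trace = (Uᵀ*(U*(Vᵀ*U))).trace := by
    have := (tp4 V Uᵀ U Uᵀ).trans (cyc4 Uᵀᵀ Uᵀ Uᵀᵀ Vᵀ)
    simpa using this
  have h3 : (U*(Vᵀ*(V*Uᵀ))).trace = (Uᵀ*(U*(Vᵀ*V))).trace :=
    (cyc4 U Vᵀ V Uᵀ).trans l1
  have h4 : (V*(Uᵀ*(V*Uᵀ))).trace = (Uᵀ*(V*(Uᵀ*V))).trace :=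
    cyc4 V Uᵀ V Uᵀ
  have h5 : (U*(Vᵀ*(U*Vᵀ))).trace = (Uᵀ*(V*(Uᵀ*V))).trace := by
    have := (cyc4 U Vᵀ U Vᵀ).trans (tp4 Vᵀ U Vᵀ U)
    simpa using this
  have h6 : (V*(Uᵀ*(U*Vᵀ))).trace = (Uᵀ*(U*(Vᵀ*V))).trace :=
    cyc4 V Uᵀ U Vᵀ
  have h7 : (U*(Vᵀ*(V*Vᵀ))).trace = (Vᵀ*(V*(Uᵀ*V))).trace := by
    have := (cyc4 U Vᵀ V Vᵀ).trans ((tp4 Vᵀ V Vᵀ U).trans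
      ((cyc4 Uᵀ Vᵀᵀ Vᵀ Vᵀᵀ).trans (cyc4 Vᵀᵀ Vᵀ Vᵀᵀ Uᵀ)))
    simpa using this
  have h8 : (V*(Uᵀ*(V*Vᵀ))).trace = (Vᵀ*(V*(Uᵀ*V))).trace :=
    (cyc4 V Uᵀ V Vᵀ).trans ((cyc4 Uᵀ V Vᵀ V).trans (cyc4 V Vᵀ V Uᵀ))
  simp only [Matrix.transpose_sub, Matrix.transpose_add, Matrix.transpose_mul,
    Matrix.transpose_transpose, Matrix.transpose_smul, Matrix.sub_mul, Matrix.mul_sub,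
    Matrix.add_mul, Matrix.mul_add, Matrix.smul_mul, Matrix.trace_sub, Matrix.trace_add,
    Matrix.trace_smul, Matrix.mul_assoc, smul_eq_mul]
  linarith [l1, h1, h2, h3, h4, h5, h6, h7, h8]
end
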